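/- arXiv:1002.0145 — 4 statements merged into one kernel-verified Lean document; each statement's English description precedes it below -/
import Mathlib

section
/- Let F be any field and let k ≥ 2. If S is an SG_k-closed set of vectors in F^n whose rank r satisfies r ≥ 9k, then |S| ≥ 2^{r/(9k)}. -/
open MvPolynomial

noncomputable section

namespace SGPaper

variable {F : Type*}

/-- The linear form with coefficient vector `v`. -/
def toForm [Field F] {n : ℕ} (v : Fin n → F) : MvPolynomial (Fin n) F :=
  ∑ i, MvPolynomial.C (v i) * MvPolynomial.X i

/-- A multiplication term `c · ∏_{ℓ ∈ S} ℓ`. -/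
def mTerm [Field F] {n : ℕ} (c : F) (S : Multiset (Fin n → F)) : MvPolynomial (Fin n) F :=
  MvPolynomial.C c * (S.map toForm).prod

/-- The `F`-linear span of the forms in the multiset `S` (radical span). -/
def radsp (F : Type*) [Field F] {n : ℕ} (S : Multiset (Fin n → F)) :
    Submodule F (Fin n → F) :=
  Submodule.span F {v | v ∈ S}

/-- `b ∈ F^* · a + K`, i.e. `b` is similar to `a` modulo the subspace `K`. -/
def simRel [Field F] {n : ℕ} (K : Submodule F (Fin n → F)) (a b : Fin n → F) : Prop :=
  ∃ c : F, c ≠ 0 ∧ b - c • a ∈ K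

/-- A `K`-matching between two multisets of linear forms: a bijection `π` with
`π(ℓ) ∈ F^*·ℓ + K` for all `ℓ`. -/
def KMatching [Field F] {n : ℕ} (K : Submodule F (Fin n → F))
    (A B : Multiset (Fin n → F)) : Prop :=
  Multiset.Rel (simRel K) A B

/-- No element of `S` is a scalar multiple of another element of `S`. -/
def MultipleFree [Field F] {n : ℕ} (S : Finset (Fin n → F)) : Prop :=
  ∀ v ∈ S, ∀ w ∈ S, ∀ c : F, w = c • v → w = v

/-- `S` is `SG_k`-closed: it consists of nonzero vectors, is multiple-free, and the span of
any `k` linearly independent vectors of `S` contains at least `k+1` vectors of `S`. -/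
def SGClosed (F : Type*) [Field F] (k : ℕ) {n : ℕ} (S : Finset (Fin n → F)) : Prop :=
  (∀ v ∈ S, v ≠ 0) ∧ MultipleFree S ∧
    ∀ V : Finset (Fin n → F), V ⊆ S → V.card = k →
      LinearIndependent F (fun v : (V : Set (Fin n → F)) => (v : Fin n → F)) →
      k + 1 ≤ ((S : Set (Fin n → F)) ∩
        (Submodule.span F (V : Set (Fin n → F)) : Set (Fin n → F))).ncard

/-- The rank of a finite set of vectors. -/
def sgRank (F : Type*) [Field F] {n : ℕ} (S : Finset (Fin n → F)) : ℕ :=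
  Module.finrank F (Submodule.span F (S : Set (Fin n → F)))

/-- `SG_k(F, m)`: the largest possible rank of an `SG_k`-closed set of at most `m`
vectors in `F^n`, over all `n`. -/
def SGBound (F : Type*) [Field F] (k m : ℕ) : ℕ :=
  sSup {r | ∃ n : ℕ, ∃ S : Finset (Fin n → F), SGClosed F k S ∧ S.card ≤ m ∧ r = sgRank F S}

/-- The polynomial computed by a multiplication gate of a depth-3 circuit. -/
def circTerm [Field F] {n d : ℕ} (c : F) (v : Fin d → Fin n → F) : MvPolynomial (Fin n) F :=
  MvPolynomial.C c * ∏ j, toForm (v j)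

/-- The multiset `L(T_i)` of linear forms of the `i`-th gate. -/
def Lmul {F : Type*} {n k d : ℕ} (ℓ : Fin k → Fin d → Fin n → F) (i : Fin k) :
    Multiset (Fin n → F) :=
  Multiset.map (ℓ i) Finset.univ.val

/-- The circuit is simple: no nonzero linear form divides all the gates. -/
def IsSimple [Field F] {n k d : ℕ} (c : Fin k → F) (ℓ : Fin k → Fin d → Fin n → F) : Prop :=
  ¬ ∃ v : Fin n → F, v ≠ 0 ∧ ∀ i, toForm v ∣ circTerm (c i) (ℓ i)

/-- The circuit is minimal: no nonempty proper subset of the gates sums to zero. -/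
def IsMinimal [Field F] {n k d : ℕ} (c : Fin k → F) (ℓ : Fin k → Fin d → Fin n → F) : Prop :=
  ∀ S : Finset (Fin k), S.Nonempty → S ≠ Finset.univ →
    ∑ i ∈ S, circTerm (c i) (ℓ i) ≠ 0

/-- The rank of a depth-3 circuit: the rank of all the linear forms occurring in it. -/
def circRank (F : Type*) [Field F] {n k d : ℕ} (ℓ : Fin k → Fin d → Fin n → F) : ℕ :=
  Module.finrank F (Submodule.span F (Set.range fun p : Fin k × Fin d => ℓ p.1 p.2))

open Classical in
/-- `M(L_K(T_i))`: the product of the forms of the gate lying in the subspace `K`. -/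
def nucTerm [Field F] {n d : ℕ} (K : Submodule F (Fin n → F)) (v : Fin d → Fin n → F) :
    MvPolynomial (Fin n) F :=
  ∏ j ∈ Finset.univ.filter (fun j => v j ∈ K), toForm (v j)

/-- A partition `P` splits `S` if some class meets `S` but does not contain it. -/
def Splits {U : Type*} [DecidableEq U] {s : Finset U} (P : Finpartition s)
    (S : Finset U) : Prop :=
  ∃ X ∈ P.parts, (X ∩ S).Nonempty ∧ ¬ S ⊆ X

/-!
Call a linearly independent set `V₀ ⊆ S` of `k - 1` vectors light if its span contains no
further point of `S`. If there is no light set, `S` is already `SG_{k-1}`-closed. Otherwise,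
project from `span V₀`: the span of `V₀` and any further point `v` contains `k + 1` points of `S`,
at most `k - 1` of them in `span V₀`, so every projected line carries at least two points of `S`.
One representative per line gives an `SG_k`-closed set with at most half as many points whose
rank is smaller by at most `k - 1`. Induction gives `2 ^ r ≤ (|S| + 1) ^ (k - 1)`.
-/

section SGClosedSets

open Submodule Module Finset

variable [Field F] {V W : Type*} [AddCommGroup V] [Module F V] [AddCommGroup W] [Module F W]

variable (F) in
/-- `SGClosed` in an arbitrary vector space, so that it can be passed to quotients. -/
def IsSGClosed (k : ℕ) (S : Finset V) : Prop :=
  (∀ v ∈ S, v ≠ 0) ∧ (∀ v ∈ S, ∀ w ∈ S, ∀ c : F, w = c • v → w = v) ∧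
    ∀ T : Finset V, T ⊆ S → T.card = k →
      LinearIndependent F (fun v : (T : Set V) => (v : V)) →
      k + 1 ≤ ((S : Set V) ∩ (span F (T : Set V) : Set V)).ncard

variable {k : ℕ} {S T : Finset V}

open Classical in
theorem isSGClosed_iff : IsSGClosed F k S ↔ (∀ v ∈ S, v ≠ 0) ∧
    (∀ v ∈ S, ∀ w ∈ S, ∀ c : F, w = c • v → w = v) ∧
    ∀ T ⊆ S, #T = k → LinearIndepOn F id (T : Set V) →
      k + 1 ≤ #{v ∈ S | v ∈ span F (T : Set V)} := by
  have h (T : Finset V) :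
      ((S : Set V) ∩ span F (T : Set V)).ncard = #{v ∈ S | v ∈ span F (T : Set V)} := by
    rw [← Set.ncard_coe_finset, coe_filter]
    rfl
  simp only [IsSGClosed, h]
  rfl

open Classical in
theorem IsSGClosed.succ_le_card_filter_mem_span (hS : IsSGClosed F k S) (hTS : T ⊆ S)
    (hT : #T = k) (hTi : LinearIndepOn F id (T : Set V)) :
    k + 1 ≤ #{v ∈ S | v ∈ span F (T : Set V)} :=
  (isSGClosed_iff.1 hS).2.2 T hTS hT hTi

theorem IsSGClosed.two_le (hS : IsSGClosed F k S) (hne : S.Nonempty) : 2 ≤ k := by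
  classical
  obtain ⟨v, hv⟩ := hne
  by_contra! hk
  interval_cases k
  · have := hS.succ_le_card_filter_mem_span (empty_subset S) rfl (by simp)
    simp only [coe_empty, span_empty, mem_bot] at this
    rw [filter_false_of_mem fun w hw => hS.1 w hw] at this
    simp at this
  · have := hS.succ_le_card_filter_mem_span (singleton_subset_iff.2 hv) (card_singleton v)
      (by simpa using LinearIndepOn.singleton (R := F) (v := id) (hS.1 v hv))
    have hsub : {w ∈ S | w ∈ span F ({v} : Finset V)} ⊆ {v} := by
      intro w hw
      obtain ⟨hwS, hw⟩ := mem_filter.1 hw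
      obtain ⟨c, rfl⟩ := mem_span_singleton.1 (by simpa using hw)
      exact mem_singleton.2 (hS.2.1 v hv _ hwS c rfl)
    have := (card_le_card hsub).trans (card_singleton v).le
    omega

section LinearMap

variable (f : V →ₗ[F] W)

theorem finrank_le_finrank_ker_add_finrank_map (P : Submodule F V) [FiniteDimensional F P]
    [FiniteDimensional F (LinearMap.ker f)] :
    finrank F P ≤ finrank F (LinearMap.ker f) + finrank F (P.map f) := by
  have h := (f.domRestrict P).finrank_range_add_finrank_ker
  rw [LinearMap.range_domRestrict, LinearMap.ker_domRestrict,
    ← finrank_map_subtype_eq P, map_comap_subtype] at h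
  have := finrank_mono (inf_le_right : P ⊓ LinearMap.ker f ≤ _)
  omega

open Classical in
theorem IsSGClosed.two_le_card_fiber (hS : IsSGClosed F (k + 1) S) {V₀ : Finset V}
    (hV₀S : V₀ ⊆ S) (hV₀ : #V₀ = k) (hV₀i : LinearIndepOn F id (V₀ : Set V))
    (hV₀f : span F (V₀ : Set V) ≤ LinearMap.ker f) (hlight : #{v ∈ S | f v = 0} ≤ k)
    {v : V} (hv : v ∈ S) (hfv : f v ≠ 0) :
    2 ≤ #{w ∈ {w ∈ S | f w ≠ 0} | (F ∙ f w) = F ∙ f v} := by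
  have hvV₀ : v ∉ span F (V₀ : Set V) := fun h => hfv (hV₀f h)
  have hT := hS.succ_le_card_filter_mem_span (insert_subset hv hV₀S)
    (by rw [card_insert_of_notMem fun h => hvV₀ (subset_span h), hV₀])
    (by simpa using hV₀i.id_insert hvV₀)
  have hsplit : {w ∈ S | w ∈ span F ↑(insert v V₀)} ⊆
      {w ∈ S | f w = 0} ∪ {w ∈ {w ∈ S | f w ≠ 0} | (F ∙ f w) = F ∙ f v} := by
    intro w hw
    obtain ⟨hwS, hw⟩ := mem_filter.1 hw
    rw [coe_insert, mem_span_insert] at hw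
    obtain ⟨a, z, hz, rfl⟩ := hw
    have hfw : f (a • v + z) = a • f v := by simp [LinearMap.mem_ker.1 (hV₀f hz)]
    simp only [mem_union, mem_filter, hfw]
    by_cases ha : a = 0
    · exact .inl ⟨hwS, by rw [ha, zero_smul]⟩
    · exact .inr ⟨⟨hwS, smul_ne_zero ha hfv⟩, span_singleton_smul_eq (IsUnit.mk0 a ha) _⟩
  have := (card_le_card hsplit).trans (card_union_le _ _)
  omega

theorem _root_.LinearIndepOn.disjoint_span_ker {s : Set V} (hs : LinearIndepOn F f s) :
    Disjoint (span F s) (LinearMap.ker f) := by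
  simpa using Submodule.range_ker_disjoint (v := ((↑) : s → V)) hs

open Classical in
theorem exists_line_representatives (S : Finset V) :
    ∃ X : Finset W, (∀ x ∈ X, ∃ v ∈ S, f v ≠ 0 ∧ f v = x) ∧
      Set.InjOn (fun x => F ∙ x) (X : Set W) ∧
      (∀ v ∈ S, f v ≠ 0 → ∃ x ∈ X, (F ∙ x) = F ∙ f v) ∧
      #X = #({v ∈ S | f v ≠ 0}.image fun v => F ∙ f v) := by
  set D := {v ∈ S | f v ≠ 0}
  obtain ⟨X, hXD, hXinj, hXlines⟩ := exists_subset_injOn_image_eq_of_surjOn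
    (↑(D.image f)) ((D.image f).image (F ∙ ·)) (by rw [coe_image]; exact Set.surjOn_image _ _)
  refine ⟨X, fun x hx => ?_, hXinj, fun v hv hfv => ?_, ?_⟩
  · obtain ⟨v, hv, rfl⟩ := mem_image.1 (hXD hx)
    exact ⟨v, (mem_filter.1 hv).1, (mem_filter.1 hv).2, rfl⟩
  · have : (F ∙ f v) ∈ X.image (F ∙ ·) :=
      hXlines ▸ mem_image_of_mem _ (mem_image_of_mem f (mem_filter.2 ⟨hv, hfv⟩))
    simpa using this
  · rw [← card_image_of_injOn hXinj, hXlines, image_image]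
    rfl

theorem IsSGClosed.of_line_representatives (hS : IsSGClosed F k S) {X : Finset W}
    (hXS : ∀ x ∈ X, ∃ v ∈ S, f v ≠ 0 ∧ f v = x)
    (hXinj : Set.InjOn (fun x => F ∙ x) (X : Set W))
    (hXcover : ∀ v ∈ S, f v ≠ 0 → ∃ x ∈ X, (F ∙ x) = F ∙ f v) :
    IsSGClosed F k X := by
  classical
  have hX0 (x : W) (hx : x ∈ X) : x ≠ 0 := by
    obtain ⟨v, -, hfv, rfl⟩ := hXS x hx
    exact hfv
  refine isSGClosed_iff.2 ⟨hX0, fun x hx y hy c hxy => hXinj hy hx ?_, fun T hTX hT hTi => ?_⟩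
  · have hc : c ≠ 0 := by rintro rfl; exact hX0 y hy (by simpa using hxy)
    simp only [hxy, span_singleton_smul_eq (IsUnit.mk0 c hc)]
  -- Lift `T` to `T' ⊆ S`. As `f` is injective on `span T'`, a further point of `S` in `span T'`
  -- lies on the line of a representative outside `T`.
  obtain ⟨T', hT'S, hfT', rfl⟩ :=
    exists_subset_injOn_image_eq_of_surjOn (S : Set V) T fun x hx =>
      let ⟨v, hv, _, hvx⟩ := hXS x (hTX hx); ⟨v, hv, hvx⟩
  have hT'i : LinearIndepOn F f (T' : Set V) := by
    rwa [linearIndepOn_iff_image hfT', ← coe_image]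
  have hT' : #T' = k := by rw [← hT, card_image_of_injOn hfT']
  obtain ⟨z, hz, hzT'⟩ := exists_mem_notMem_of_card_lt_card <|
    hT'.trans_lt (hS.succ_le_card_filter_mem_span hT'S hT' (hT'i.of_comp f))
  obtain ⟨hzS, hzT'span⟩ := mem_filter.1 hz
  have hdisj := disjoint_def.1 hT'i.disjoint_span_ker
  obtain ⟨x, hxX, hx⟩ := hXcover z hzS fun h => hS.1 z hzS (hdisj z hzT'span h)
  have hxspan : x ∈ span F ↑(T'.image f) := by
    rw [coe_image, span_image]
    exact (span_singleton_le_iff_mem _ _).2 (mem_map_of_mem hzT'span)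
      (hx ▸ mem_span_singleton_self x)
  have hxT : x ∉ T'.image f := by
    rintro hxT
    obtain ⟨w, hw, rfl⟩ := mem_image.1 hxT
    obtain ⟨c, hc⟩ := mem_span_singleton.1 (hx ▸ mem_span_singleton_self (f z))
    have hzw : z = c • w := sub_eq_zero.1 <| hdisj _
      (sub_mem hzT'span (smul_mem _ c (subset_span hw))) (by simp [hc])
    exact hzT' (hS.2.1 w (hT'S hw) z hzS c hzw ▸ hw)
  have hsub : insert x (T'.image f) ⊆ {y ∈ X | y ∈ span F ↑(T'.image f)} :=
    insert_subset (mem_filter.2 ⟨hxX, hxspan⟩) fun y hy =>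
      mem_filter.2 ⟨hTX hy, subset_span hy⟩
  simpa [card_insert_of_notMem hxT, hT] using card_le_card hsub

end LinearMap

open Classical in
theorem IsSGClosed.exists_quotient_of_light (hS : IsSGClosed F (k + 1) S) {V₀ : Finset V}
    (hV₀S : V₀ ⊆ S) (hV₀ : #V₀ = k) (hV₀i : LinearIndepOn F id (V₀ : Set V))
    (hlight : #{v ∈ S | v ∈ span F (V₀ : Set V)} ≤ k) :
    ∃ X : Finset (V ⧸ span F (V₀ : Set V)), IsSGClosed F (k + 1) X ∧ 2 * #X + k ≤ #S ∧
      finrank F (span F (S : Set V)) ≤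
        k + finrank F (span F (X : Set (V ⧸ span F (V₀ : Set V)))) := by
  set f := (span F (V₀ : Set V)).mkQ
  have hf (v : V) : f v = 0 ↔ v ∈ span F (V₀ : Set V) := Submodule.Quotient.mk_eq_zero _
  obtain ⟨X, hXS, hXinj, hXcover, hX⟩ := exists_line_representatives f S
  refine ⟨X, hS.of_line_representatives f hXS hXinj hXcover, ?_, ?_⟩
  · have hfibers :
        2 * #({v ∈ S | f v ≠ 0}.image fun v => F ∙ f v) ≤ #{v ∈ S | f v ≠ 0} := by
      refine mul_card_image_le_card _ 2 fun L hL => ?_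
      obtain ⟨v, hv, rfl⟩ := mem_image.1 hL
      obtain ⟨hvS, hfv⟩ := mem_filter.1 hv
      refine hS.two_le_card_fiber f hV₀S hV₀ hV₀i ?_ ?_ hvS hfv
      · rw [Submodule.ker_mkQ]
      · simpa only [hf] using hlight
    have hV₀ker : #V₀ ≤ #{v ∈ S | f v = 0} :=
      card_le_card fun v hv => mem_filter.2 ⟨hV₀S hv, (hf v).2 (subset_span hv)⟩
    have hsplit : #{v ∈ S | f v = 0} + #{v ∈ S | f v ≠ 0} = #S :=
      card_filter_add_card_filter_not _
    omega
  · have : FiniteDimensional F (LinearMap.ker f) := by rw [Submodule.ker_mkQ]; infer_instance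
    have hker : finrank F (LinearMap.ker f) ≤ k := by
      rw [Submodule.ker_mkQ, ← hV₀]
      exact finrank_span_finset_le_card V₀
    have hmap : (span F (S : Set V)).map f ≤ span F (X : Set _) := by
      rw [← span_image, span_le]
      rintro _ ⟨v, hv, rfl⟩
      by_cases hfv : f v = 0
      · simp [hfv]
      obtain ⟨x, hx, hxv⟩ := hXcover v hv hfv
      exact (span_singleton_le_iff_mem _ _).1 (hxv ▸ span_mono (by simpa using hx))
    have := finrank_le_finrank_ker_add_finrank_map f (span F (S : Set V))
    have := finrank_mono hmap
    omega

theorem IsSGClosed.two_pow_finrank_span_le (hS : IsSGClosed F k S) :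
    2 ^ finrank F (span F (S : Set V)) ≤ (#S + 1) ^ (k - 1) := by
  induction hm : #S using Nat.strong_induction_on generalizing V k S with
  | _ m ih =>
  subst hm
  obtain rfl | hne := S.eq_empty_or_nonempty
  · rw [coe_empty, span_empty, finrank_bot]
    simp
  induction k with
  | zero => exact absurd (hS.two_le hne) (by norm_num)
  | succ k ihk =>
    classical
    by_cases hlight : ∃ V₀ ⊆ S, #V₀ = k ∧ LinearIndepOn F id (V₀ : Set V) ∧
        #{v ∈ S | v ∈ span F (V₀ : Set V)} ≤ k
    · obtain ⟨V₀, hV₀S, hV₀, hV₀i, hlight⟩ := hlight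
      obtain ⟨X, hX, hcard, hrank⟩ := hS.exists_quotient_of_light hV₀S hV₀ hV₀i hlight
      have hk := hS.two_le hne
      have hXbound := ih #X (by omega) hX rfl
      rw [add_tsub_cancel_right] at hXbound ⊢
      calc 2 ^ finrank F (span F (S : Set V))
          ≤ 2 ^ (k + finrank F (span F (X : Set (V ⧸ span F (V₀ : Set V))))) :=
            Nat.pow_le_pow_right two_pos hrank
        _ ≤ 2 ^ k * (#X + 1) ^ k := by rw [pow_add]; exact Nat.mul_le_mul_left _ hXbound
        _ = (2 * #X + 2) ^ k := by rw [← mul_pow, mul_add_one]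
        _ ≤ (#S + 1) ^ k := Nat.pow_le_pow_left (by omega) _
    · push Not at hlight
      have hS' : IsSGClosed F k S := isSGClosed_iff.2 ⟨hS.1, hS.2.1, hlight⟩
      calc 2 ^ finrank F (span F (S : Set V)) ≤ (#S + 1) ^ (k - 1) := ihk hS'
        _ ≤ (#S + 1) ^ (k + 1 - 1) := Nat.pow_le_pow_right (by omega) (by omega)

end SGClosedSets

theorem two_rpow_div_nine_mul_le {k r m : ℕ} (hk : 1 ≤ k) (hr : 9 * k ≤ r)
    (hb : 2 ^ r ≤ (m + 1) ^ (k - 1)) : (2 : ℝ) ^ ((r : ℝ) / (9 * k)) ≤ m := by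
  have hm : 2 ≤ m := by
    by_contra! hm
    interval_cases m
    · rw [zero_add, one_pow, ← pow_zero 2, Nat.pow_le_pow_iff_right one_lt_two] at hb
      omega
    · have := (Nat.pow_le_pow_iff_right one_lt_two).mp hb
      omega
  have hpow : 2 ^ r ≤ m ^ (9 * k) :=
    calc 2 ^ r ≤ (m + 1) ^ (k - 1) := hb
      _ ≤ (m ^ 2) ^ (k - 1) := Nat.pow_le_pow_left (by nlinarith) _
      _ = m ^ (2 * (k - 1)) := by rw [← pow_mul]
      _ ≤ m ^ (9 * k) := Nat.pow_le_pow_right (by omega) (by omega)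
  have h9k : (9 * k : ℕ) ≠ 0 := by omega
  rw [← pow_le_pow_iff_left₀ (by positivity) (by positivity) h9k, ← Real.rpow_natCast,
    ← Real.rpow_mul zero_le_two, Nat.cast_mul, Nat.cast_ofNat,
    div_mul_cancel₀ _ (by positivity)]
  exact_mod_cast hpow

/-- If `S` is an `SG_k`-closed set of vectors in `F^n` (`k ≥ 2`) whose rank
`r` satisfies `r ≥ 9k`, then `|S| ≥ 2^(r/(9k))`. -/
theorem sg_closed_card_lower_bound {F : Type*} [Field F] {n : ℕ} (k : ℕ) (hk : 2 ≤ k)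
    (S : Finset (Fin n → F)) (hS : SGClosed F k S)
    (hr : 9 * k ≤ sgRank F S) :
    (2 : ℝ) ^ ((sgRank F S : ℝ) / ((9 : ℝ) * k)) ≤ (S.card : ℝ) := by
  have hbound : 2 ^ sgRank F S ≤ (S.card + 1) ^ (k - 1) :=
    IsSGClosed.two_pow_finrank_span_le hS
  exact two_rpow_div_nine_mul_le (by omega) hr hbound

end SGPaper
end
end

section
/- For any field F and integers k, m ≥ 2, SG_k(F,m) ≤ 9·k·log₂ m, i.e., every SG_k-closed set of at most m vectors in F^n (for any n) has rank at most 9·k·log₂ m. -/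
/-!
Let `T ⊆ S` be a maximal independent set with `|T| ≤ k` and `S ∩ span T = T`; the `SG_k`
condition forces `|T| < k`. Project along `K = span T`. By maximality, every point of `S` off `K`
shares its projected line with a second point of `S`, so picking one representative per projected
line gives a set `B` with `2|B| ≤ |S|` and `rank S ≤ rank B + (k - 1)`. It is again `SG_k`-closed:
lift `k` independent points of `B` to `S`; the extra point of `S` in their span projects onto a
new line in their span. Iterating, `rank S ≤ (k - 1)(log₂ |S| + 1) ≤ 9 k log₂ m`.
-/

open MvPolynomial

noncomputable section

namespace SGPaper

variable {F : Type*}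

section

variable [Field F] {n k : ℕ}

theorem exists_multipleFree_subset (A : Finset (Fin n → F)) :
    ∃ B ⊆ A, (∀ b ∈ B, b ≠ 0) ∧ MultipleFree B ∧ ∀ a ∈ A, a ≠ 0 → ∃ b ∈ B, a ∈ F ∙ b := by
  classical
  set P := (A.filter (· ≠ 0)).powerset.filter MultipleFree
  have hP : ∅ ∈ P := by simp [P, MultipleFree]
  obtain ⟨B, hBP, hBmax⟩ := P.exists_max_image Finset.card ⟨∅, hP⟩
  simp only [P, Finset.mem_filter, Finset.mem_powerset, Finset.subset_iff] at hBP
  obtain ⟨hBA, hBmf⟩ := hBP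
  refine ⟨B, fun b hb => (hBA hb).1, fun b hb => (hBA hb).2, hBmf, fun a ha ha0 => ?_⟩
  by_cases haB : a ∈ B
  · exact ⟨a, haB, Submodule.mem_span_singleton_self a⟩
  by_contra! hcov
  suffices insert a B ∈ P by
    have := hBmax _ this
    rw [Finset.card_insert_of_notMem haB] at this
    omega
  simp only [P, Finset.mem_filter, Finset.mem_powerset]
  refine ⟨Finset.insert_subset (by simpa using ⟨ha, ha0⟩) fun b hb => by simpa using hBA hb, ?_⟩
  intro v hv w hw c hwc
  rcases Finset.mem_insert.mp hv with rfl | hvB <;>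
    rcases Finset.mem_insert.mp hw with rfl | hwB
  · rfl
  · have hc : c ≠ 0 := by
      rintro rfl
      exact (hBA hwB).2 (by simpa using hwc)
    exact absurd (Submodule.mem_span_singleton.mpr ⟨c⁻¹, by rw [hwc, smul_smul,
      inv_mul_cancel₀ hc, one_smul]⟩) (hcov w hwB)
  · exact absurd (Submodule.mem_span_singleton.mpr ⟨c, hwc.symm⟩) (hcov v hvB)
  · exact hBmf v hvB w hwB c hwc

theorem finrank_le_finrank_map_add_finrank_ker {V V' : Type*} [AddCommGroup V] [Module F V]
    [AddCommGroup V'] [Module F V'] (f : V →ₗ[F] V') (W : Submodule F V)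
    [FiniteDimensional F W] [FiniteDimensional F (LinearMap.ker f)] :
    Module.finrank F W ≤ Module.finrank F (W.map f) + Module.finrank F (LinearMap.ker f) := by
  rw [← (f.domRestrict W).finrank_range_add_finrank_ker, LinearMap.range_domRestrict]
  gcongr
  exact LinearMap.finrank_le_finrank_of_injective (f := W.subtype.restrict fun x hx => hx)
    fun _ _ h => Subtype.val_injective <| Subtype.val_injective <|
      congrArg (fun z : LinearMap.ker f => (z : V)) h

theorem succ_card_le_ncard_inter_span_iff {B W : Finset (Fin n → F)} (hWB : W ⊆ B) :
    W.card + 1 ≤ ((B : Set (Fin n → F)) ∩ Submodule.span F (W : Set (Fin n → F))).ncard ↔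
      ∃ b ∈ B, b ∈ Submodule.span F (W : Set (Fin n → F)) ∧ b ∉ W := by
  constructor
  · intro h
    by_contra! hno
    have hsub : (B : Set (Fin n → F)) ∩ Submodule.span F (W : Set (Fin n → F)) ⊆ W :=
      fun b ⟨hbB, hbW⟩ => hno b hbB hbW
    have := Set.ncard_le_ncard hsub W.finite_toSet
    rw [Set.ncard_coe_finset] at this
    omega
  · rintro ⟨b, hbB, hbW, hb⟩
    have hsub : insert b (W : Set (Fin n → F)) ⊆
        (B : Set (Fin n → F)) ∩ Submodule.span F (W : Set (Fin n → F)) :=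
      Set.insert_subset ⟨hbB, hbW⟩ fun w hw => ⟨hWB hw, Submodule.subset_span hw⟩
    calc W.card + 1 = (insert b (W : Set (Fin n → F))).ncard := by
          rw [Set.ncard_insert_of_notMem (by simpa using hb), Set.ncard_coe_finset]
      _ ≤ _ := Set.ncard_le_ncard hsub (B.finite_toSet.inter_of_left _)

theorem two_mul_card_le_card {α : Type*} (f : α → Fin n → F) {S : Finset α}
    {B : Finset (Fin n → F)} (hBS : Set.SurjOn f S B) (hB0 : ∀ b ∈ B, b ≠ 0)
    (hB : MultipleFree B)
    (hpair : ∀ v ∈ S, f v ≠ 0 → ∃ x ∈ S, x ≠ v ∧ f x ≠ 0 ∧ f x ∈ F ∙ f v) :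
    2 * B.card ≤ S.card := by
  classical
  calc 2 * B.card = B.card * 2 := mul_comm _ _
    _ ≤ (S.filter fun x => f x ≠ 0).card * 1 :=
      Finset.card_mul_le_card_mul (fun b x => f x ∈ F ∙ b) ?_ ?_
    _ ≤ S.card := (mul_one _).trans_le (Finset.card_filter_le _ _)
  · intro b hb
    obtain ⟨v, hvS, rfl⟩ := hBS hb
    obtain ⟨x, hxS, hxv, hx0, hx⟩ := hpair v hvS (hB0 _ hb)
    refine Finset.one_lt_card.mpr ⟨x, ?_, v, ?_, hxv⟩ <;>
      simp only [Finset.mem_bipartiteAbove, Finset.mem_filter]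
    exacts [⟨⟨hxS, hx0⟩, hx⟩, ⟨⟨hvS, hB0 _ hb⟩, Submodule.mem_span_singleton_self _⟩]
  · intro x hx
    simp only [Finset.mem_filter] at hx
    refine Finset.card_le_one.mpr fun a ha b hb => ?_
    simp only [Finset.mem_bipartiteBelow, Submodule.mem_span_singleton] at ha hb
    obtain ⟨haB, c, hc⟩ := ha
    obtain ⟨hbB, d, hd⟩ := hb
    have hc0 : c ≠ 0 := by
      rintro rfl
      exact hx.2 (by rw [← hc, zero_smul])
    exact hB b hbB a haB (c⁻¹ * d) (by rw [mul_smul, hd, ← hc, inv_smul_smul₀ hc0])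

namespace SGClosed

variable {S : Finset (Fin n → F)}

theorem exists_mem_span_notMem (hS : SGClosed F k S) {X : Finset (Fin n → F)} (hXS : X ⊆ S)
    (hXk : X.card = k) (hX : LinearIndepOn F id (X : Set (Fin n → F))) :
    ∃ y ∈ S, y ∈ Submodule.span F (X : Set (Fin n → F)) ∧ y ∉ X :=
  (succ_card_le_ncard_inter_span_iff hXS).mp (hXk ▸ hS.2.2 X hXS hXk hX)

theorem card_lt {T : Finset (Fin n → F)} (hS : SGClosed F k S) (hTS : T ⊆ S)
    (hT : LinearIndepOn F id (T : Set (Fin n → F))) (hTk : T.card ≤ k)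
    (hclosed : ∀ x ∈ S, x ∈ Submodule.span F (T : Set (Fin n → F)) → x ∈ T) : T.card < k := by
  refine lt_of_le_of_ne hTk fun h => ?_
  obtain ⟨y, hyS, hyT, hy⟩ := hS.exists_mem_span_notMem hTS h hT
  exact hy (hclosed y hyS hyT)

theorem exists_flat (hS : SGClosed F k S) :
    ∃ K : Submodule F (Fin n → F), Module.finrank F K < k ∧
      ∀ v ∈ S, v ∉ K → ∃ x ∈ S, x ≠ v ∧ x ∉ K ∧ x ∈ F ∙ v ⊔ K := by
  classical
  set P : Finset (Finset (Fin n → F)) := S.powerset.filter fun T =>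
    T.card ≤ k ∧ LinearIndepOn F id (T : Set (Fin n → F)) ∧
      ∀ x ∈ S, x ∈ Submodule.span F (T : Set (Fin n → F)) → x ∈ T
  have hP : ∅ ∈ P := by
    simp only [P, Finset.mem_filter, Finset.mem_powerset, Finset.coe_empty,
      Submodule.span_empty, Submodule.mem_bot]
    exact ⟨Finset.empty_subset _, Nat.zero_le _, linearIndepOn_empty F id,
      fun x hxS hx => absurd hx (hS.1 x hxS)⟩
  obtain ⟨T, hTP, hTmax⟩ := P.exists_max_image Finset.card ⟨∅, hP⟩
  simp only [P, Finset.mem_filter, Finset.mem_powerset] at hTP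
  obtain ⟨hTS, hTk, hT, hclosed⟩ := hTP
  have hTk' := hS.card_lt hTS hT hTk hclosed
  refine ⟨Submodule.span F T, (finrank_span_finset_le_card T).trans_lt hTk',
    fun v hvS hvK => ?_⟩
  by_contra! hno
  have hvT : v ∉ T := fun h => hvK (Submodule.subset_span h)
  suffices insert v T ∈ P by
    have := hTmax _ this
    rw [Finset.card_insert_of_notMem hvT] at this
    omega
  simp only [P, Finset.mem_filter, Finset.mem_powerset, Finset.coe_insert, Submodule.span_insert,
    Finset.card_insert_of_notMem hvT]
  refine ⟨Finset.insert_subset hvS hTS, hTk', hT.id_insert hvK, fun x hxS hx => ?_⟩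
  by_cases hxv : x = v
  · exact hxv ▸ Finset.mem_insert_self v T
  by_cases hxK : x ∈ Submodule.span F (T : Set (Fin n → F))
  · exact Finset.mem_insert_of_mem (hclosed x hxS hxK)
  · exact absurd hx (hno x hxS hxv hxK)

theorem of_linearMap (hS : SGClosed F k S) (π : (Fin n → F) →ₗ[F] (Fin n → F))
    {B : Finset (Fin n → F)} (hBS : Set.SurjOn π S B) (hB0 : ∀ b ∈ B, b ≠ 0)
    (hB : MultipleFree B) (hcover : ∀ x ∈ S, π x ≠ 0 → ∃ b ∈ B, π x ∈ F ∙ b) :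
    SGClosed F k B := by
  classical
  refine ⟨hB0, hB, fun W hWB hWk hW => ?_⟩
  obtain ⟨X, hXS, hinj, rfl⟩ := Finset.exists_subset_injOn_image_eq_of_surjOn (f := π) S W
    (hBS.mono subset_rfl (Finset.coe_subset.mpr hWB))
  have hXk : X.card = k := (Finset.card_image_of_injOn hinj).symm.trans hWk
  rw [Finset.coe_image] at hW
  have hXπ : LinearIndepOn F π (X : Set (Fin n → F)) := (linearIndepOn_iff_image hinj).mpr hW
  have hdisj : Disjoint (Submodule.span F (X : Set (Fin n → F))) (LinearMap.ker π) := by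
    simpa using Submodule.range_ker_disjoint hXπ
  obtain ⟨y, hyS, hyX, hy⟩ :=
    hS.exists_mem_span_notMem (by exact_mod_cast hXS) hXk (hXπ.of_comp π)
  have hπy0 : π y ≠ 0 := fun h => hS.1 y hyS (Submodule.disjoint_def.mp hdisj y hyX h)
  -- `π` is injective on `span X`, and `S` is multiple-free.
  have hπy : ∀ x ∈ X, ∀ c : F, π y ≠ c • π x := by
    intro x hx c h
    have hyx : y - c • x = 0 := Submodule.disjoint_def.mp hdisj _
      (sub_mem hyX (Submodule.smul_mem _ c (Submodule.subset_span hx))) (by simp [h])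
    exact hy (hS.2.1 x (hXS hx) y hyS c (sub_eq_zero.mp hyx) ▸ hx)
  obtain ⟨b, hbB, hb⟩ := hcover y hyS hπy0
  obtain ⟨c, hcb⟩ := Submodule.mem_span_singleton.mp hb
  have hc : c ≠ 0 := by
    rintro rfl
    exact hπy0 (by rw [← hcb, zero_smul])
  refine hWk ▸ (succ_card_le_ncard_inter_span_iff hWB).mpr ⟨b, hbB, ?_, ?_⟩
  · rw [Finset.coe_image, ← inv_smul_smul₀ hc b, hcb, Submodule.span_image]
    exact Submodule.smul_mem _ _ (Submodule.mem_map_of_mem hyX)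
  · intro hbX
    obtain ⟨x, hx, rfl⟩ := Finset.mem_image.mp hbX
    exact hπy x hx c hcb.symm

theorem exists_sgClosed_two_mul_card_le (hS : SGClosed F k S) :
    ∃ B : Finset (Fin n → F), SGClosed F k B ∧ 2 * B.card ≤ S.card ∧
      sgRank F S ≤ sgRank F B + (k - 1) := by
  classical
  obtain ⟨K, hKk, hflat⟩ := hS.exists_flat
  obtain ⟨K', hK'⟩ := K.exists_isCompl
  set π := K'.projection K hK'.symm
  have hker : ∀ x, π x = 0 ↔ x ∈ K := fun x => Submodule.projection_apply_eq_zero_iff _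
  obtain ⟨B, hBS, hB0, hB, hcover⟩ := exists_multipleFree_subset (S.image π)
  have hBπ : Set.SurjOn π S B := fun b hb => by simpa using hBS hb
  have hcoverS : ∀ x ∈ S, π x ≠ 0 → ∃ b ∈ B, π x ∈ F ∙ b :=
    fun x hx => hcover _ (Finset.mem_image_of_mem _ hx)
  have hpair : ∀ v ∈ S, π v ≠ 0 → ∃ x ∈ S, x ≠ v ∧ π x ≠ 0 ∧ π x ∈ F ∙ π v := by
    intro v hv hπv
    obtain ⟨x, hxS, hxv, hxK, hx⟩ := hflat v hv (mt (hker v).mpr hπv)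
    obtain ⟨y, hy, z, hz, rfl⟩ := Submodule.mem_sup.mp hx
    obtain ⟨a, rfl⟩ := Submodule.mem_span_singleton.mp hy
    refine ⟨a • v + z, hxS, hxv, mt (hker _).mp hxK, ?_⟩
    rw [map_add, (hker z).mpr hz, add_zero, map_smul]
    exact Submodule.smul_mem _ a (Submodule.mem_span_singleton_self _)
  refine ⟨B, hS.of_linearMap π hBπ hB0 hB hcoverS, ?_, ?_⟩
  · exact two_mul_card_le_card π hBπ hB0 hB hpair
  · have hmap : (Submodule.span F (S : Set (Fin n → F))).map π ≤
        Submodule.span F (B : Set (Fin n → F)) := by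
      rw [← Submodule.span_image, Submodule.span_le]
      rintro _ ⟨x, hx, rfl⟩
      by_cases h : π x = 0
      · exact h ▸ zero_mem _
      obtain ⟨b, hb, hxb⟩ := hcoverS x hx h
      exact Submodule.span_mono (by simpa using hb) hxb
    have hkerK : LinearMap.ker π = K := Submodule.ker_projection _
    calc sgRank F S
        ≤ Module.finrank F ((Submodule.span F (S : Set (Fin n → F))).map π) +
          Module.finrank F (LinearMap.ker π) := finrank_le_finrank_map_add_finrank_ker π _
      _ ≤ sgRank F B + (k - 1) := by
          gcongr
          · exact Submodule.finrank_mono hmap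
          · rw [hkerK]; omega

theorem sgRank_le (hS : SGClosed F k S) : sgRank F S ≤ (k - 1) * (Nat.log 2 S.card + 1) := by
  induction h : S.card using Nat.strong_induction_on generalizing S with
  | _ N ih =>
  obtain ⟨B, hB, hBS, hrank⟩ := hS.exists_sgClosed_two_mul_card_le
  rcases B.eq_empty_or_nonempty with rfl | hBne
  · rw [show sgRank F (∅ : Finset (Fin n → F)) = 0 by simp [sgRank], zero_add] at hrank
    exact hrank.trans (Nat.le_mul_of_pos_right _ (Nat.succ_pos _))
  have hBpos := hBne.card_pos
  have ihB := ih B.card (by omega) hB rfl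
  have hlog : Nat.log 2 B.card + 1 ≤ Nat.log 2 N := by
    rw [← Nat.log_mul_base one_lt_two hBpos.ne']
    exact Nat.log_mono_right (by omega)
  calc sgRank F S ≤ (k - 1) * (Nat.log 2 B.card + 1) + (k - 1) := by omega
    _ = (k - 1) * (Nat.log 2 B.card + 1 + 1) := by ring
    _ ≤ (k - 1) * (Nat.log 2 N + 1) := by gcongr

end SGClosed

end

theorem sg_rank_upper_bound_general {F : Type*} [Field F] (k m : ℕ) (hm : 2 ≤ m)
    {n : ℕ} (S : Finset (Fin n → F)) (hS : SGClosed F k S) (hcard : S.card ≤ m) :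
    (sgRank F S : ℝ) ≤ 9 * (k : ℝ) * Real.logb 2 (m : ℝ) := by
  have hlog : (1 : ℝ) ≤ Real.logb 2 m := by
    rw [Real.le_logb_iff_rpow_le one_lt_two (by positivity), Real.rpow_one]
    exact_mod_cast hm
  have hL : (Nat.log 2 S.card : ℝ) ≤ Real.logb 2 m :=
    (Nat.cast_le.mpr (Nat.log_mono_right hcard)).trans (Real.natLog_le_logb m 2)
  have hk : ((k - 1 : ℕ) : ℝ) ≤ k := by exact_mod_cast Nat.sub_le k 1
  calc (sgRank F S : ℝ) ≤ ((k - 1 : ℕ) : ℝ) * (Nat.log 2 S.card + 1) := by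
        exact_mod_cast hS.sgRank_le
    _ ≤ k * (2 * Real.logb 2 m) := by gcongr; linarith
    _ ≤ 9 * k * Real.logb 2 m := by nlinarith [k.cast_nonneg (α := ℝ)]

/-- For any field `F` and `k, m ≥ 2`, every `SG_k`-closed set of at most
`m` vectors in `F^n` (for any `n`) has rank at most `9·k·log₂ m`. -/
theorem sg_rank_upper_bound {F : Type*} [Field F] (k m : ℕ) (hk : 2 ≤ k) (hm : 2 ≤ m)
    {n : ℕ} (S : Finset (Fin n → F)) (hS : SGClosed F k S) (hcard : S.card ≤ m) :
    (sgRank F S : ℝ) ≤ 9 * (k : ℝ) * Real.logb 2 (m : ℝ) :=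
  sg_rank_upper_bound_general k m hm S hS hcard

end SGPaper
end
end

section
/- Let h ∈ R, let f be a multiplication term, and let I be an ideal of R generated by multiplication terms f_1,...,f_m. Then h ∉ ⟨I, f⟩ if and only if there exists g ∈ nod_I(f) such that h ∉ ⟨I, g⟩. -/
/-!
Write `V = radsp(I)`. The generators of `I` are polynomials in the forms of `V`, and a linear
form `ℓ ∉ V` is a nonzerodivisor modulo any ideal generated by such polynomials: a projection of
`F^n` along `ℓ` fixing `V` induces a substitution that fixes the ideal and kills `ℓ`. Splitting off
the forms outside `V + Fℓ` one at a time by further projections, `ℓ` stays a nonzerodivisor modulo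
`I + (g)` for every product `g` of forms not similar to `ℓ`. So the product `g₁` of a similarity
class outside `V` is a nonzerodivisor modulo `I + (g₂)`, `g₂` the product of the other forms, whence
`(I + (g₁)) ∩ (I + (g₂)) ⊆ I + (g₁ g₂)`; induction on the number of classes gives the nontrivial
implication, and the other one holds because each node divides `f`.
-/

open MvPolynomial

noncomputable section

namespace SGPaper

variable {F : Type*}

section IdealQuotient

variable {R : Type*} [CommRing R]

theorem isSMulRegular_quotient_iff {J : Ideal R} {a : R} :
    IsSMulRegular (R ⧸ J) a ↔ ∀ x, a * x ∈ J → x ∈ J :=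
  isSMulRegular_quotient_iff_mem_of_smul_mem J a

theorem mem_sup_span_singleton {J : Ideal R} {x y : R} :
    x ∈ J ⊔ Ideal.span {y} ↔ ∃ a, ∃ b ∈ J, a * y + b = x := by
  rw [sup_comm, Ideal.mem_span_singleton_sup]

theorem mem_sup_span_mul_of_isSMulRegular {J : Ideal R} {a b x : R}
    (ha : IsSMulRegular (R ⧸ (J ⊔ Ideal.span {b})) a)
    (hxa : x ∈ J ⊔ Ideal.span {a}) (hxb : x ∈ J ⊔ Ideal.span {b}) :
    x ∈ J ⊔ Ideal.span {a * b} := by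
  obtain ⟨q, i, hi, rfl⟩ := mem_sup_span_singleton.mp hxa
  have hqa : a * q ∈ J ⊔ Ideal.span {b} := by
    simpa [mul_comm] using Submodule.sub_mem _ hxb (Submodule.mem_sup_left hi)
  obtain ⟨s, j, hj, rfl⟩ := mem_sup_span_singleton.mp (isSMulRegular_quotient_iff.mp ha q hqa)
  exact mem_sup_span_singleton.mpr
    ⟨s, j * a + i, J.add_mem (J.mul_mem_right a hj) hi, by ring⟩

theorem sub_map_mem_span_singleton_mul {φ : R →+* R} {a : R} {G : Set R}
    (hG : ∀ g ∈ G, φ g = g) (hφ : ∀ r, r - φ r ∈ Ideal.span {a}) {x : R}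
    (hx : x ∈ Ideal.span G) : x - φ x ∈ Ideal.span {a} * Ideal.span G := by
  induction hx using Submodule.span_induction with
  | mem g hg => simp [hG g hg]
  | zero => simp
  | add x y _ _ hx hy =>
    rw [map_add, add_sub_add_comm]
    exact Ideal.add_mem _ hx hy
  | smul r x hxG hx =>
    have hφx : φ x ∈ Ideal.span G := by
      simpa only [sub_sub_cancel] using Ideal.sub_mem _ hxG (Ideal.mul_le_right hx)
    rw [smul_eq_mul, map_mul, show r * x - φ r * φ x = r * (x - φ x) + (r - φ r) * φ x by ring]
    exact Ideal.add_mem _ (Ideal.mul_mem_left _ r hx) (Ideal.mul_mem_mul (hφ r) hφx)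

theorem map_mem_span_of_forall_eq {φ : R →+* R} {a : R} {G : Set R}
    (hG : ∀ g ∈ G, φ g = g) (hφ : ∀ r, r - φ r ∈ Ideal.span {a}) {x : R}
    (hx : x ∈ Ideal.span G) : φ x ∈ Ideal.span G := by
  simpa only [sub_sub_cancel] using
    Ideal.sub_mem _ hx (Ideal.mul_le_right (sub_map_mem_span_singleton_mul hG hφ hx))

theorem isSMulRegular_quotient_span_of_map_eq_zero [IsDomain R] {φ : R →+* R} {a : R}
    {G : Set R} (ha : a ≠ 0) (hφa : φ a = 0) (hG : ∀ g ∈ G, φ g = g)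
    (hφ : ∀ r, r - φ r ∈ Ideal.span {a}) : IsSMulRegular (R ⧸ Ideal.span G) a := by
  refine isSMulRegular_quotient_iff.mpr fun x hx => ?_
  have hax := sub_map_mem_span_singleton_mul hG hφ hx
  rw [map_mul, hφa, zero_mul, sub_zero] at hax
  obtain ⟨z, hz, hza⟩ := Ideal.mem_span_singleton_mul.mp hax
  rwa [← mul_left_cancel₀ ha hza]

/-- Writing `w = φ w + b * w₁`, applying `φ` to `l * w ∈ J + (b * m)` puts `φ w` in `J`, and
what is left, `b * (l * w₁ - r * m) ∈ J`, puts `l * w₁` in `J + (m)`. -/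
theorem isSMulRegular_quotient_sup_span_mul {φ : R →+* R} {G : Set R} {l b m : R}
    (hG : ∀ g ∈ G, φ g = g) (hφl : φ l = l) (hφb : φ b = 0)
    (hφ : ∀ r, r - φ r ∈ Ideal.span {b})
    (hl : IsSMulRegular (R ⧸ Ideal.span G) l) (hb : IsSMulRegular (R ⧸ Ideal.span G) b)
    (hlm : IsSMulRegular (R ⧸ (Ideal.span G ⊔ Ideal.span {m})) l) :
    IsSMulRegular (R ⧸ (Ideal.span G ⊔ Ideal.span {b * m})) l := by
  refine isSMulRegular_quotient_iff.mpr fun w hw => ?_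
  obtain ⟨r, i, hi, hri⟩ := mem_sup_span_singleton.mp hw
  have hφw : φ w ∈ Ideal.span G := by
    refine isSMulRegular_quotient_iff.mp hl _ ?_
    rw [← hφl, ← map_mul, ← hri, map_add, map_mul, map_mul, hφb, zero_mul, mul_zero, zero_add]
    exact map_mem_span_of_forall_eq hG hφ hi
  obtain ⟨w₁, hw₁⟩ := Ideal.mem_span_singleton'.mp (hφ w)
  have hlw₁ : l * w₁ - r * m ∈ Ideal.span G := by
    refine isSMulRegular_quotient_iff.mp hb _ ?_
    have : b * (l * w₁ - r * m) = i - l * φ w := by linear_combination l * hw₁ - hri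
    rw [this]
    exact Ideal.sub_mem _ hi (Ideal.mul_mem_left _ l hφw)
  have hlw₁' : l * w₁ ∈ Ideal.span G ⊔ Ideal.span {m} :=
    mem_sup_span_singleton.mpr ⟨r, l * w₁ - r * m, hlw₁, by ring⟩
  obtain ⟨s, j, hj, rfl⟩ := mem_sup_span_singleton.mp (isSMulRegular_quotient_iff.mp hlm w₁ hlw₁')
  exact mem_sup_span_singleton.mpr ⟨s, φ w + j * b,
    Ideal.add_mem _ hφw (Ideal.mul_mem_right _ _ hj), by linear_combination hw₁⟩

end IdealQuotient

theorem exists_projection_along_of_notMem {K E : Type*} [Field K] [AddCommGroup E] [Module K E]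
    {W : Submodule K E} {b : E} (hb : b ∉ W) :
    ∃ π : E →ₗ[K] E, π b = 0 ∧ (∀ v ∈ W, π v = v) ∧ ∀ v, v - π v ∈ K ∙ b := by
  obtain ⟨f, hfb, hfW⟩ := W.exists_dual_map_eq_bot_of_notMem hb inferInstance
  have hfW : ∀ v ∈ W, f v = 0 := fun v hv => by
    simpa [hfW] using Submodule.mem_map_of_mem (f := f) hv
  refine ⟨LinearMap.id - (f b)⁻¹ • f.smulRight b, ?_, fun v hv => ?_, fun v => ?_⟩
  · simp [smul_smul, inv_mul_cancel₀ hfb]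
  · simp [hfW v hv]
  · simpa [smul_smul] using
      Submodule.smul_mem _ ((f b)⁻¹ * f v) (Submodule.mem_span_singleton_self b)

section Forms

variable [Field F] {n : ℕ}

def toFormₗ : (Fin n → F) →ₗ[F] MvPolynomial (Fin n) F where
  toFun := toForm
  map_add' v w := by simp [toForm, add_mul, Finset.sum_add_distrib]
  map_smul' c v := by simp [toForm, Finset.smul_sum, smul_eq_C_mul, mul_assoc]

@[simp] theorem toFormₗ_apply (v : Fin n → F) : toFormₗ v = toForm v := rfl

theorem toForm_sub (v w : Fin n → F) : toForm (v - w) = toForm v - toForm w :=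
  map_sub toFormₗ v w

theorem toForm_smul (c : F) (v : Fin n → F) : toForm (c • v) = C c * toForm v := by
  rw [← toFormₗ_apply, map_smul, toFormₗ_apply, smul_eq_C_mul]

@[simp] theorem toForm_zero : toForm (0 : Fin n → F) = 0 :=
  map_zero toFormₗ

@[simp] theorem toForm_single (i : Fin n) : toForm (Pi.single i (1 : F)) = X i := by
  classical
  simp [toForm, Pi.single_apply]

theorem toForm_ne_zero {v : Fin n → F} (hv : v ≠ 0) : toForm v ≠ 0 := by
  classical
  contrapose! hv
  funext i
  simpa [toForm, coeff_sum, coeff_C_mul, coeff_X, Finsupp.single_left_inj] using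
    congrArg (coeff (Finsupp.single i 1)) hv

theorem toForm_mem_span_singleton {v b : Fin n → F} (hv : v ∈ F ∙ b) :
    toForm v ∈ Ideal.span {toForm b} := by
  obtain ⟨c, rfl⟩ := Submodule.mem_span_singleton.mp hv
  rw [toForm_smul]
  exact Ideal.mul_mem_left _ _ (Ideal.subset_span rfl)

theorem mTerm_cons (c : F) (b : Fin n → F) (S : Multiset (Fin n → F)) :
    mTerm c (b ::ₘ S) = toForm b * mTerm c S := by
  simp only [mTerm, Multiset.map_cons, Multiset.prod_cons]
  ring

theorem mTerm_add (c : F) (S T : Multiset (Fin n → F)) :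
    mTerm c (S + T) = mTerm c S * mTerm 1 T := by
  simp only [mTerm, Multiset.map_add, Multiset.prod_add, C_1]
  ring

@[simp] theorem mTerm_one_zero : mTerm (1 : F) (0 : Multiset (Fin n → F)) = 1 := by
  simp [mTerm]

def substForms (π : (Fin n → F) →ₗ[F] (Fin n → F)) :
    MvPolynomial (Fin n) F →ₐ[F] MvPolynomial (Fin n) F :=
  aeval fun i => toForm (π (Pi.single i 1))

@[simp] theorem substForms_toForm (π : (Fin n → F) →ₗ[F] (Fin n → F)) (v : Fin n → F) :
    substForms π (toForm v) = toForm (π v) := by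
  have : (substForms π).toLinearMap ∘ₗ toFormₗ = toFormₗ ∘ₗ π :=
    (Pi.basisFun F (Fin n)).ext fun i => by simp [substForms]
  exact LinearMap.congr_fun this v

theorem sub_substForms_mem_span {π : (Fin n → F) →ₗ[F] (Fin n → F)} {b : Fin n → F}
    (hπ : ∀ v, v - π v ∈ F ∙ b) (p : MvPolynomial (Fin n) F) :
    p - substForms π p ∈ Ideal.span {toForm b} := by
  have : Ideal.Quotient.mkₐ F (Ideal.span {toForm b}) =
      (Ideal.Quotient.mkₐ F _).comp (substForms π) := by
    refine MvPolynomial.algHom_ext fun i => ?_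
    rw [AlgHom.comp_apply, Ideal.Quotient.mkₐ_eq_mk, Ideal.Quotient.eq, ← toForm_single,
      substForms_toForm, ← toForm_sub]
    exact toForm_mem_span_singleton (hπ _)
  exact Ideal.Quotient.eq.mp (AlgHom.congr_fun this p)

def formAlgebra (V : Submodule F (Fin n → F)) : Subalgebra F (MvPolynomial (Fin n) F) :=
  Algebra.adjoin F (toForm '' V)

theorem formAlgebra_mono {V W : Submodule F (Fin n → F)} (h : V ≤ W) :
    formAlgebra V ≤ formAlgebra W :=
  Algebra.adjoin_mono (Set.image_mono h)

theorem mTerm_mem_formAlgebra {V : Submodule F (Fin n → F)} (c : F) {S : Multiset (Fin n → F)}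
    (hS : ∀ v ∈ S, v ∈ V) : mTerm c S ∈ formAlgebra V := by
  refine Subalgebra.mul_mem _ (Subalgebra.algebraMap_mem _ c) (Subalgebra.multiset_prod_mem _ ?_)
  simp only [Multiset.mem_map]
  rintro _ ⟨v, hv, rfl⟩
  exact Algebra.subset_adjoin ⟨v, hS v hv, rfl⟩

theorem substForms_eq_self {V : Submodule F (Fin n → F)} {π : (Fin n → F) →ₗ[F] (Fin n → F)}
    (hπ : ∀ v ∈ V, π v = v) {p : MvPolynomial (Fin n) F} (hp : p ∈ formAlgebra V) :
    substForms π p = p :=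
  AlgHom.adjoin_le_equalizer (substForms π) (AlgHom.id F _)
    (by rintro _ ⟨v, hv, rfl⟩; simp [hπ v hv]) hp

end Forms

section Similarity

variable [Field F] {n : ℕ} {K : Submodule F (Fin n → F)}

theorem simRel_refl (a : Fin n → F) : simRel K a a := ⟨1, one_ne_zero, by simp⟩

theorem simRel_symm {a b : Fin n → F} (h : simRel K a b) : simRel K b a := by
  obtain ⟨c, hc, h⟩ := h
  refine ⟨c⁻¹, inv_ne_zero hc, ?_⟩
  convert K.smul_mem (-c⁻¹) h using 1
  match_scalars <;> field_simp

theorem simRel_trans {a b c : Fin n → F} (hab : simRel K a b) (hbc : simRel K b c) :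
    simRel K a c := by
  obtain ⟨c₁, hc₁, hab⟩ := hab
  obtain ⟨c₂, hc₂, hbc⟩ := hbc
  refine ⟨c₂ * c₁, mul_ne_zero hc₂ hc₁, ?_⟩
  convert K.add_mem hbc (K.smul_mem c₂ hab) using 1
  module

theorem simRel_of_mem {a b : Fin n → F} (ha : a ∈ K) (hb : b ∈ K) : simRel K a b :=
  ⟨1, one_ne_zero, K.sub_mem hb (by simpa using ha)⟩

theorem notMem_of_simRel {a b : Fin n → F} (ha : a ∉ K) (h : simRel K a b) : b ∉ K := by
  obtain ⟨c, hc, h⟩ := h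
  intro hb
  exact ha (by simpa [hc] using K.smul_mem c⁻¹ (K.sub_mem hb h))

theorem notMem_sup_span_of_not_simRel {a b : Fin n → F} (hb : b ∉ K) (h : ¬ simRel K a b) :
    b ∉ K ⊔ F ∙ a := by
  intro hmem
  obtain ⟨y, hy, z, hz, rfl⟩ := Submodule.mem_sup.mp hmem
  obtain ⟨c, rfl⟩ := Submodule.mem_span_singleton.mp hz
  rcases eq_or_ne c 0 with rfl | hc
  · exact hb (by simpa using hy)
  · exact h ⟨c, hc, by simpa using hy⟩

end Similarity

section Cancellation

variable [Field F] {n : ℕ} {V : Submodule F (Fin n → F)} {G : Set (MvPolynomial (Fin n) F)}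

theorem isSMulRegular_toForm (hG : G ⊆ formAlgebra V) {b : Fin n → F} (hb : b ∉ V) :
    IsSMulRegular (MvPolynomial (Fin n) F ⧸ Ideal.span G) (toForm b) := by
  obtain ⟨π, hπb, hπV, hπ⟩ := exists_projection_along_of_notMem hb
  exact isSMulRegular_quotient_span_of_map_eq_zero (φ := (substForms π).toRingHom)
    (toForm_ne_zero fun h => hb (h ▸ V.zero_mem)) (by simp [hπb])
    (fun g hg => substForms_eq_self hπV (hG hg)) (sub_substForms_mem_span hπ)

theorem isSMulRegular_toForm_sup (hG : G ⊆ formAlgebra V) {l : Fin n → F} (hl : l ∉ V)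
    (B : Multiset (Fin n → F)) (hB : ∀ b ∈ B, ¬ simRel V l b) :
    IsSMulRegular (MvPolynomial (Fin n) F ⧸ (Ideal.span G ⊔ Ideal.span {mTerm 1 B}))
      (toForm l) := by
  classical
  induction B using Multiset.strongInductionOn with
  | _ B ih =>
  by_cases hBV : ∀ b ∈ B, b ∈ V
  · rw [← Ideal.span_union]
    exact isSMulRegular_toForm
      (Set.union_subset hG (Set.singleton_subset_iff.mpr (mTerm_mem_formAlgebra 1 hBV))) hl
  obtain ⟨b, hbB, hbV⟩ := not_forall₂.mp hBV
  obtain ⟨π, hπb, hπV, hπ⟩ :=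
    exists_projection_along_of_notMem (notMem_sup_span_of_not_simRel hbV (hB b hbB))
  rw [← Multiset.cons_erase hbB, mTerm_cons]
  exact isSMulRegular_quotient_sup_span_mul (φ := (substForms π).toRingHom)
    (fun g hg => substForms_eq_self hπV (formAlgebra_mono le_sup_left (hG hg)))
    (by simp [hπV l (Submodule.mem_sup_right (Submodule.mem_span_singleton_self l))])
    (by simp [hπb]) (sub_substForms_mem_span hπ)
    (isSMulRegular_toForm hG hl) (isSMulRegular_toForm hG hbV)
    (ih _ (Multiset.erase_lt.mpr hbB) fun b' hb' => hB b' (Multiset.mem_of_mem_erase hb'))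

theorem isSMulRegular_mTerm_sup (hG : G ⊆ formAlgebra V) (T B : Multiset (Fin n → F))
    (hT : ∀ x ∈ T, x ∉ V ∧ ∀ b ∈ B, ¬ simRel V x b) :
    IsSMulRegular (MvPolynomial (Fin n) F ⧸ (Ideal.span G ⊔ Ideal.span {mTerm 1 B}))
      (mTerm 1 T) := by
  induction T using Multiset.induction with
  | empty => simp [IsSMulRegular.one]
  | cons x T ih =>
    rw [mTerm_cons]
    obtain ⟨hxV, hxB⟩ := hT x (Multiset.mem_cons_self x T)
    exact (isSMulRegular_toForm_sup hG hxV B hxB).mul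
      (ih fun y hy => hT y (Multiset.mem_cons_of_mem hy))

open scoped Classical in
theorem mem_sup_span_mTerm_of_forall_class (hG : G ⊆ formAlgebra V)
    {h : MvPolynomial (Fin n) F} (S : Multiset (Fin n → F))
    (hS : ∀ a ∈ S, h ∈ Ideal.span G ⊔ Ideal.span {mTerm 1 (S.filter (simRel V a))}) :
    h ∈ Ideal.span G ⊔ Ideal.span {mTerm 1 S} := by
  induction S using Multiset.strongInductionOn with
  | _ S ih =>
  by_cases hSV : ∀ a ∈ S, a ∈ V
  · rcases S.empty_or_exists_mem with rfl | ⟨a, ha⟩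
    · simp [Ideal.span_singleton_one]
    · rw [← Multiset.filter_eq_self.mpr fun b hb => simRel_of_mem (hSV a ha) (hSV b hb)]
      exact hS a ha
  obtain ⟨a₁, ha₁S, ha₁V⟩ := not_forall₂.mp hSV
  set S₁ := S.filter (simRel V a₁)
  set S₂ := S.filter fun b => ¬ simRel V a₁ b
  have hS₂ : S₂ < S := lt_of_le_of_ne (Multiset.filter_le _ S) fun hS₂S =>
    (Multiset.mem_filter.mp (hS₂S ▸ ha₁S : a₁ ∈ S₂)).2 (simRel_refl a₁)
  have hclass : ∀ a ∈ S₂, S.filter (simRel V a) = S₂.filter (simRel V a) := by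
    intro a ha
    rw [Multiset.filter_filter]
    refine Multiset.filter_congr fun x _ => ⟨fun hax => ⟨hax, fun ha₁x => ?_⟩, And.left⟩
    exact (Multiset.mem_filter.mp ha).2 (simRel_trans ha₁x (simRel_symm hax))
  rw [← Multiset.filter_add_not (simRel V a₁) S, mTerm_add]
  refine mem_sup_span_mul_of_isSMulRegular (isSMulRegular_mTerm_sup hG S₁ S₂ fun x hx => ?_)
    (hS a₁ ha₁S) (ih S₂ hS₂ fun a ha => hclass a ha ▸ hS a (Multiset.mem_of_mem_filter ha))
  have ha₁x := (Multiset.mem_filter.mp hx).2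
  exact ⟨notMem_of_simRel ha₁V ha₁x, fun b hb hxb =>
    (Multiset.mem_filter.mp hb).2 (simRel_trans ha₁x hxb)⟩

end Cancellation

open scoped Classical in
theorem not_mem_iff_exists_node_general {F : Type*} [Field F] {n m : ℕ}
    (cI : Fin m → F) (SI : Fin m → Multiset (Fin n → F))
    (cf : F) (Sf : Multiset (Fin n → F)) (hcf : cf ≠ 0)
    (h : MvPolynomial (Fin n) F) :
    h ∉ Ideal.span (Set.range fun i => mTerm (cI i) (SI i)) ⊔ Ideal.span {mTerm cf Sf} ↔
      ∃ a ∈ Sf, h ∉ Ideal.span (Set.range fun i => mTerm (cI i) (SI i)) ⊔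
        Ideal.span {mTerm 1 (Sf.filter (simRel (radsp F (∑ i, SI i)) a))} := by
  set V := radsp F (∑ i, SI i)
  have hG : Set.range (fun i => mTerm (cI i) (SI i)) ⊆ formAlgebra V := by
    rintro _ ⟨i, rfl⟩
    exact mTerm_mem_formAlgebra _ fun v hv =>
      Submodule.subset_span (Multiset.mem_sum.mpr ⟨i, Finset.mem_univ i, hv⟩)
  have hf : mTerm cf Sf = C cf * mTerm 1 Sf := by simp [mTerm]
  rw [hf, Ideal.span_singleton_mul_left_unit ((isUnit_iff_ne_zero.mpr hcf).map C)]
  constructor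
  · intro hns
    by_contra! hall
    exact hns (mem_sup_span_mTerm_of_forall_class hG Sf hall)
  · rintro ⟨a, -, ha⟩ hmem
    have hdvd : mTerm 1 (Sf.filter (simRel V a)) ∣ mTerm 1 Sf :=
      Dvd.intro _ (by rw [← mTerm_add, Multiset.filter_add_not])
    exact ha (sup_le_sup_left (Ideal.span_singleton_le_span_singleton.mpr hdvd) _ hmem)

open scoped Classical in
/-- `h ∉ ⟨I, f⟩` iff `h ∉ ⟨I, g⟩` for some node `g ∈ nod_I(f)`, the nodes
being the products of the similarity classes (mod `radsp(I)`) of the forms of `f`. -/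
theorem not_mem_iff_exists_node {F : Type*} [Field F] {n m : ℕ}
    (cI : Fin m → F) (SI : Fin m → Multiset (Fin n → F))
    (hcI : ∀ i, cI i ≠ 0) (hSI : ∀ i, ∀ v ∈ SI i, v ≠ 0)
    (cf : F) (Sf : Multiset (Fin n → F)) (hcf : cf ≠ 0) (hSf : ∀ v ∈ Sf, v ≠ 0)
    (h : MvPolynomial (Fin n) F) :
    h ∉ Ideal.span (Set.range fun i => mTerm (cI i) (SI i)) ⊔ Ideal.span {mTerm cf Sf} ↔
      ∃ a ∈ Sf, h ∉ Ideal.span (Set.range fun i => mTerm (cI i) (SI i)) ⊔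
        Ideal.span {mTerm 1 (Sf.filter (simRel (radsp F (∑ i, SI i)) a))} :=
  not_mem_iff_exists_node_general cI SI cf Sf hcf h

end SGPaper
end
end

section
/- Let k ≥ 2 and let 𝔓 be a collection (multiset) of at least k − 1 non-trivial partitions of {1,...,k} with the splitting property. Then there is a chain A_1,...,A_{k−1} in 𝔓 such that the complement {1,...,k} \ (A_1 ∪ ... ∪ A_{k−1}) equals {k}. -/
/-!
Write `x` for the last point. It suffices to assign to the other points `y` pairwise distinct
partitions `P_{f y}` in which `y` and `x` lie in different classes: the classes `A_y` of `y`
then cover every point but `x`. Such an assignment exists by Hall's theorem, since for a set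
`W` of points other than `x`, every partition splitting `W ∪ {x}` separates some point of `W`
from `x`; when `W ∪ {x}` is everything, non-triviality and `N ≥ k - 1` take over.
-/

open MvPolynomial

noncomputable section

namespace SGPaper

variable {F : Type*}

open Finset

theorem _root_.Finpartition.parts_eq_singleton_of_part_eq {U : Type*} [DecidableEq U]
    {s : Finset U} (P : Finpartition s) {a : U} (ha : a ∈ s) (h : P.part a = s) :
    P.parts = {s} := by
  rw [eq_singleton_iff_unique_mem]
  refine ⟨by simpa only [h] using P.part_mem.2 ha, fun t ht => ?_⟩
  obtain ⟨b, hb⟩ := P.nonempty_of_mem_parts ht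
  rw [← h]
  exact P.eq_of_mem_parts ht (P.part_mem.2 ha) hb (by rw [h]; exact P.le ht hb)

theorem _root_.Finpartition.exists_notMem_part {U : Type*} [DecidableEq U] {s : Finset U}
    (P : Finpartition s) (hP : P.parts ≠ {s}) {a : U} (ha : a ∈ s) :
    ∃ b ∈ s, b ∉ P.part a := by
  by_contra! h
  exact hP (P.parts_eq_singleton_of_part_eq ha ((P.part_subset a).antisymm h))

theorem Splits.exists_notMem_part {U : Type*} [DecidableEq U] {s : Finset U}
    {P : Finpartition s} {T : Finset U} (hT : Splits P T) {x : U} (hx : x ∈ s) :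
    ∃ y ∈ T, y ∉ P.part x := by
  obtain ⟨X, hX, ⟨a, ha⟩, hTX⟩ := hT
  obtain ⟨haX, haT⟩ := mem_inter.1 ha
  by_contra! h
  have hXx : X = P.part x := P.eq_of_mem_parts hX (P.part_mem.2 hx) haX (h a haT)
  exact hTX (hXx ▸ h)

section Separation

variable {U ι α : Type*} [Fintype U] [DecidableEq U] [Fintype ι] [Fintype α]
  {P : ι → Finpartition (univ : Finset U)} {x : U} {e : α → U}

open scoped Classical in
theorem card_le_card_biUnion_separating (hP : ∀ i, (P i).parts ≠ {univ})
    (hsplit : ∀ S : Finset U, S.Nonempty → S ≠ univ →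
      #S - 1 ≤ #{i | Splits (P i) S})
    (he : Function.Injective e) (hex : ∀ a, e a ≠ x) (hcard : Fintype.card α ≤ Fintype.card ι)
    (s : Finset α) : #s ≤ #(s.biUnion fun a => {i | e a ∉ (P i).part x}) := by
  set T := insert x (s.image e)
  have hseparating : ∀ i, ∀ y ∈ T, y ∉ (P i).part x →
      i ∈ s.biUnion fun a => {i | e a ∉ (P i).part x} := by
    intro i y hyT hy
    have hyx : y ≠ x := by rintro rfl; exact hy ((P i).mem_part (mem_univ y))
    obtain ⟨a, has, rfl⟩ : ∃ a ∈ s, e a = y := by simpa [T, hyx] using hyT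
    exact mem_biUnion.2 ⟨a, has, by simpa using hy⟩
  by_cases hT : T = univ
  · have hall : (s.biUnion fun a => {i | e a ∉ (P i).part x}) = univ := by
      refine eq_univ_of_forall fun i => ?_
      obtain ⟨y, -, hy⟩ := (P i).exists_notMem_part (hP i) (mem_univ x)
      exact hseparating i y (hT ▸ mem_univ y) hy
    rw [hall, card_univ]
    exact (card_le_univ s).trans hcard
  · have hTcard : #T = #s + 1 := by
      rw [card_insert_of_notMem (by simpa using fun a _ => hex a), card_image_of_injective s he]
    have hsub : ({i | Splits (P i) T} : Finset ι) ⊆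
        s.biUnion fun a => {i | e a ∉ (P i).part x} := fun i hi => by
      obtain ⟨y, hyT, hy⟩ := (mem_filter.1 hi).2.exists_notMem_part (mem_univ x)
      exact hseparating i y hyT hy
    calc #s = #T - 1 := by omega
      _ ≤ #{i | Splits (P i) T} := hsplit T (insert_nonempty _ _) hT
      _ ≤ _ := card_le_card hsub

open scoped Classical in
theorem exists_injective_notMem_part (hP : ∀ i, (P i).parts ≠ {univ})
    (hsplit : ∀ S : Finset U, S.Nonempty → S ≠ univ →
      #S - 1 ≤ #{i | Splits (P i) S})
    (he : Function.Injective e) (hex : ∀ a, e a ≠ x) (hcard : Fintype.card α ≤ Fintype.card ι) :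
    ∃ f : α → ι, Function.Injective f ∧ ∀ a, e a ∉ (P (f a)).part x := by
  obtain ⟨f, hf, hft⟩ := (all_card_le_biUnion_card_iff_exists_injective _).1
    (card_le_card_biUnion_separating hP hsplit he hex hcard)
  exact ⟨f, hf, fun a => by simpa using hft a⟩

end Separation

theorem sdiff_biUnion_part_eq_singleton {U α : Type*} [Fintype U] [DecidableEq U] [Fintype α]
    (Q : α → Finpartition (univ : Finset U)) (x : U) (e : α → U)
    (hcover : ∀ y, y ≠ x → ∃ a, e a = y) (hsep : ∀ a, e a ∉ (Q a).part x) :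
    univ \ univ.biUnion (fun a => (Q a).part (e a)) = {x} := by
  ext y
  simp only [mem_sdiff, mem_univ, mem_biUnion, true_and, not_exists, mem_singleton]
  constructor
  · intro hy
    by_contra hyx
    obtain ⟨a, rfl⟩ := hcover y hyx
    exact hy a ((Q a).mem_part (mem_univ _))
  · rintro rfl a hxa
    rw [(Q a).mem_part_iff_part_eq_part (mem_univ _) (mem_univ (e a))] at hxa
    exact hsep a (hxa ▸ (Q a).mem_part (mem_univ (e a)))

open scoped Classical in
/-- A collection of at least `k − 1` non-trivial partitions of `{1,...,k}`
(here `Fin k`, `k ≥ 2`) with the splitting property contains a chain `A_1,...,A_{k−1}` whose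
complement is exactly the singleton of the last element. -/
theorem splitting_property_chain (k : ℕ) (hk : 2 ≤ k) (N : ℕ) (hN : k - 1 ≤ N)
    (P : Fin N → Finpartition (Finset.univ : Finset (Fin k)))
    (hPnt : ∀ i, (P i).parts ≠ {Finset.univ})
    (hsplit : ∀ S : Finset (Fin k), S.Nonempty → S ≠ Finset.univ →
      S.card - 1 ≤ (Finset.univ.filter fun i => Splits (P i) S).card) :
    ∃ ι : Fin (k - 1) → Fin N, Function.Injective ι ∧
      ∃ A : Fin (k - 1) → Finset (Fin k), (∀ t, A t ∈ (P (ι t)).parts) ∧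
        Finset.univ \ Finset.univ.biUnion A = {(⟨k - 1, by omega⟩ : Fin k)} := by
  set x : Fin k := ⟨k - 1, by omega⟩
  set e : Fin (k - 1) → Fin k := Fin.castLE (Nat.sub_le k 1)
  have hex : ∀ a, e a ≠ x := fun a h => by
    have := congrArg Fin.val h
    simp [e, x] at this
    omega
  have hcover : ∀ y, y ≠ x → ∃ a, e a = y := fun y hyx =>
    ⟨⟨y, by have := Fin.val_ne_of_ne hyx; simp [x] at this; omega⟩, rfl⟩
  obtain ⟨ι, hι, hsep⟩ := exists_injective_notMem_part hPnt hsplit (Fin.castLE_injective _) hex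
    (by simpa using hN)
  exact ⟨ι, hι, fun a => (P (ι a)).part (e a), fun a => (P (ι a)).part_mem.2 (mem_univ _),
    sdiff_biUnion_part_eq_singleton _ x e hcover hsep⟩

end SGPaper
end
end
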